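/- arXiv:2312.14589 — 4 statements merged into one kernel-verified Lean document; each statement's English description precedes it below -/
import Mathlib

section
/- Let D ≥ 1. Fix functions p_{t|0} : ℝ^D → (0,∞), p_{τ|0} : ℝ^D → (0,∞), and p_{τ|t} : ℝ^D × ℝ^D → (0,∞), (x_τ, x) ↦ p_{τ|t}(x_τ|x), with x ↦ p_{τ|t}(x_τ|x) differentiable for every x_τ. Define the bridge density p_{t|0,τ}(x|x_τ) = p_{t|0}(x) p_{τ|t}(x_τ|x) / p_{τ|0}(x_τ). Let Π be a probability measure on ℝ^D, define π_{t|0}(x) = ∫ p_{t|0,τ}(x|x_τ) dΠ(x_τ), assumed finite and strictly positive, and A(x) = (∫ ∇_x ln p_{τ|t}(x_τ|x) · p_{t|0,τ}(x|x_τ) dΠ(x_τ)) / π_{t|0}(x), assumed finite. Assume that the function x ↦ ∫ (p_{τ|t}(x_τ|x)/p_{τ|0}(x_τ)) dΠ(x_τ) is finite, strictly positive, and differentiable with gradient ∫ (∇_x p_{τ|t}(x_τ|x)/p_{τ|0}(x_τ)) dΠ(x_τ). Then for every x, A(x) = ∇_x ln ∫ (p_{τ|t}(x_τ|x)/p_{τ|0}(x_τ))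 dΠ(x_τ). -/
/-! Both sides reduce to `∫ ∇p_{τ|t}(x_τ|x) / p_{τ|0}(x_τ) dΠ / F(x)`: by `∇ ln p = ∇p / p` the
factor `p_{τ|t}` of the bridge density cancels against the logarithmic derivative, the common
factor `p_{t|0}(x)` comes out of both integrals, and `π_{t|0} = p_{t|0} · F`. -/

open MeasureTheory Real Set

/-- The gradient of a scalar function on `ℝ^D`, given coordinatewise by the
partial derivatives. -/
noncomputable def grad {D : ℕ} (f : (Fin D → ℝ) → ℝ) (x : Fin D → ℝ) : Fin D → ℝ :=
  fun i => fderiv ℝ f x (Pi.single i 1)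

theorem grad_log {D : ℕ} {f : (Fin D → ℝ) → ℝ} {x : Fin D → ℝ}
    (hf : DifferentiableAt ℝ f x) (hx : f x ≠ 0) :
    grad (fun y => Real.log (f y)) x = (f x)⁻¹ • grad f x := by
  funext i
  simp [grad, fderiv.log hf hx]

theorem mul_div_smul_grad_log {D : ℕ} {f : (Fin D → ℝ) → ℝ} {x : Fin D → ℝ}
    (hf : DifferentiableAt ℝ f x) (hx : f x ≠ 0) (c q : ℝ) :
    (c * f x / q) • grad (fun y => Real.log (f y)) x = c • (q⁻¹ • grad f x) := by
  rw [grad_log hf hx, smul_smul, smul_smul]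
  congr 1
  field_simp

theorem integral_mul_div {α : Type*} [MeasurableSpace α] (μ : Measure α)
    (c : ℝ) (f g : α → ℝ) :
    ∫ a, c * f a / g a ∂μ = c * ∫ a, f a / g a ∂μ := by
  simp_rw [mul_div_assoc]
  exact integral_const_mul c _

theorem drift_adjustment_identity_constant_start_general
    {D : ℕ}
    (pt0 : (Fin D → ℝ) → ℝ) (pτ0 : (Fin D → ℝ) → ℝ)
    (pτt : (Fin D → ℝ) → (Fin D → ℝ) → ℝ)  -- `pτt xτ x` is `p_{τ|t}(x_τ|x)`
    (hpt0pos : ∀ x, 0 < pt0 x)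
    (hpτtpos : ∀ xτ x, 0 < pτt xτ x)
    (hpτtdiff : ∀ xτ, Differentiable ℝ (pτt xτ))
    (Pm : Measure (Fin D → ℝ))
    (b : (Fin D → ℝ) → (Fin D → ℝ) → ℝ)  -- the bridge density `p_{t|0,τ}(x|x_τ)`
    (hb : ∀ xτ x, b xτ x = pt0 x * pτt xτ x / pτ0 xτ)
    (π0 : (Fin D → ℝ) → ℝ) (A : (Fin D → ℝ) → Fin D → ℝ)
    (hπ0 : ∀ x, π0 x = ∫ xτ, b xτ x ∂Pm)
    (hA : ∀ x, A x
      = (π0 x)⁻¹ • ∫ xτ, b xτ x • grad (fun y => Real.log (pτt xτ y)) x ∂Pm)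
    (F : (Fin D → ℝ) → ℝ)
    (hF : ∀ x, F x = ∫ xτ, pτt xτ x / pτ0 xτ ∂Pm)
    (hFpos : ∀ x, 0 < F x)
    (hFdiff : Differentiable ℝ F)
    (hFgrad : ∀ x, grad F x = ∫ xτ, (pτ0 xτ)⁻¹ • grad (pτt xτ) x ∂Pm) :
    ∀ x, A x = grad (fun y => Real.log (F y)) x := by
  intro x
  have hπ0F : π0 x = pt0 x * F x := by
    simp only [hπ0, hb, hF, integral_mul_div]
  have hdrift : (∫ xτ, b xτ x • grad (fun y => Real.log (pτt xτ y)) x ∂Pm)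
      = pt0 x • grad F x := by
    simp only [hb, mul_div_smul_grad_log (hpτtdiff _ x) (hpτtpos _ x).ne', integral_smul, hFgrad]
  calc A x = (pt0 x * F x)⁻¹ • (pt0 x • grad F x) := by rw [hA, hdrift, hπ0F]
    _ = (F x)⁻¹ • grad F x := by
      rw [smul_smul, mul_inv_rev, inv_mul_cancel_right₀ (hpt0pos x).ne']
    _ = grad (fun y => Real.log (F y)) x := (grad_log (hFdiff x) (hFpos x).ne').symm

/-- First drift adjustment identity for a constant initial value: the drift adjustment
`A(x) = (∫ ∇_x ln p_{τ|t}(x_τ|x) p_{t|0,τ}(x|x_τ) dΠ(x_τ)) / π_{t|0}(x)` of the diffusion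
bridge mixture transport equals `∇_x ln ∫ (p_{τ|t}(x_τ|x)/p_{τ|0}(x_τ)) dΠ(x_τ)`. -/
theorem drift_adjustment_identity_constant_start
    {D : ℕ} (hD : 1 ≤ D)
    (pt0 : (Fin D → ℝ) → ℝ) (pτ0 : (Fin D → ℝ) → ℝ)
    (pτt : (Fin D → ℝ) → (Fin D → ℝ) → ℝ)  -- `pτt xτ x` is `p_{τ|t}(x_τ|x)`
    (hpt0pos : ∀ x, 0 < pt0 x) (hpτ0pos : ∀ xτ, 0 < pτ0 xτ)
    (hpτtpos : ∀ xτ x, 0 < pτt xτ x)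
    (hpτtdiff : ∀ xτ, Differentiable ℝ (pτt xτ))
    (Pm : Measure (Fin D → ℝ)) [IsProbabilityMeasure Pm]
    (b : (Fin D → ℝ) → (Fin D → ℝ) → ℝ)  -- the bridge density `p_{t|0,τ}(x|x_τ)`
    (hb : ∀ xτ x, b xτ x = pt0 x * pτt xτ x / pτ0 xτ)
    (π0 : (Fin D → ℝ) → ℝ) (A : (Fin D → ℝ) → Fin D → ℝ)
    (hπ0int : ∀ x, Integrable (fun xτ => b xτ x) Pm)
    (hπ0 : ∀ x, π0 x = ∫ xτ, b xτ x ∂Pm)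
    (hπ0pos : ∀ x, 0 < π0 x)
    (hAint : ∀ x, Integrable
      (fun xτ => b xτ x • grad (fun y => Real.log (pτt xτ y)) x) Pm)
    (hA : ∀ x, A x
      = (π0 x)⁻¹ • ∫ xτ, b xτ x • grad (fun y => Real.log (pτt xτ y)) x ∂Pm)
    (F : (Fin D → ℝ) → ℝ)
    (hFint : ∀ x, Integrable (fun xτ => pτt xτ x / pτ0 xτ) Pm)
    (hF : ∀ x, F x = ∫ xτ, pτt xτ x / pτ0 xτ ∂Pm)
    (hFpos : ∀ x, 0 < F x)
    (hFdiff : Differentiable ℝ F)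
    (hFgradint : ∀ x, Integrable (fun xτ => (pτ0 xτ)⁻¹ • grad (pτt xτ) x) Pm)
    (hFgrad : ∀ x, grad F x = ∫ xτ, (pτ0 xτ)⁻¹ • grad (pτt xτ) x ∂Pm) :
    ∀ x, A x = grad (fun y => Real.log (F y)) x :=
  drift_adjustment_identity_constant_start_general pt0 pτ0 pτt hpt0pos hpτtpos hpτtdiff Pm b hb π0 A
    hπ0 hA F hF hFpos hFdiff hFgrad
end

section
/- Let D ≥ 1, let Γ be a symmetric positive definite D×D real matrix, let a ≠ 0 and v > 0 be real numbers, and let P be any probability measure on ℝ^D. Define q(y) = ∫ N_D(y; a x₀, v Γ) dP(x₀). Then: (i) q is finite, strictly positive, and differentiable on ℝ^D with ∇q(y) = ∫ ∇_y N_D(y; a x₀, v Γ) dP(x₀); (ii) for every y, the function x₀ ↦ x₀ · N_D(y; a x₀, v Γ)/q(y) is P-integrable, so the posterior mean m(y) = ∫ x₀ (N_D(y; a x₀, v Γ)/q(y)) dP(x₀) is well defined; and (iii) ∇ ln q(y) = (1/v) Γ^{-1} (a m(y) − y) for every y ∈ ℝ^D. -/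
open MeasureTheory Real Set

/-- The multivariate Gaussian density `N_D(x; m, C)` on `ℝ^D` with mean `m` and
(symmetric positive definite) covariance matrix `C`. -/
noncomputable def gaussDensity {D : ℕ} (m : Fin D → ℝ) (C : Matrix (Fin D) (Fin D) ℝ)
    (x : Fin D → ℝ) : ℝ :=
  (2 * Real.pi) ^ (-(D : ℝ) / 2) * C.det ^ (-(1 : ℝ) / 2) *
    Real.exp (-(dotProduct (x - m) (C⁻¹.mulVec (x - m))) / 2)

/-! The Gaussian gradient `∇_y N(y; m, C) = -N(y; m, C) C⁻¹ (y - m)` is bounded uniformly in `m`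
and `y`: writing `C⁻¹ = Lᵀ L` and `t = ‖L (y - m)‖`, it is at most a constant times `t e^{-t²/2}`.
This licenses differentiation of `q` under the integral sign. Multiplying the gradient by `C` gives
`N · m = N · y + C ∇N`, so for `m = a x₀` with `a ≠ 0` the function `N · x₀` is `P`-integrable
and `∇q(y) = C⁻¹ (∫ N · m dP - q(y) y)`; dividing by `q(y)` gives the formula for `∇ ln q`. -/

open Matrix MatrixOrder

lemma mul_exp_neg_sq_div_two_le_one (t : ℝ) : t * exp (-(t ^ 2 / 2)) ≤ 1 := by
  have : t ≤ exp (t ^ 2 / 2) := by nlinarith [add_one_le_exp (t ^ 2 / 2), sq_nonneg (t - 1)]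
  rwa [exp_neg, ← div_eq_mul_inv, div_le_one (exp_pos _)]

section DotProduct

variable {n : Type*} [Fintype n]

noncomputable def dotProductL : (n → ℝ) →L[ℝ] (n → ℝ) →L[ℝ] ℝ :=
  (dotProductBilin ℝ ℝ).toContinuousBilinearMap

@[simp] lemma dotProductL_apply (v w : n → ℝ) : dotProductL v w = v ⬝ᵥ w := rfl

lemma hasFDerivAt_dotProduct_mulVec_self {B : Matrix n n ℝ} (hB : Bᵀ = B)
    (x : n → ℝ) :
    HasFDerivAt (fun y => y ⬝ᵥ B *ᵥ y) (dotProductL ((2 : ℝ) • B *ᵥ x)) x := by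
  have hbil := dotProductL.hasFDerivAt_of_bilinear (hasFDerivAt_id x)
    (mulVecLin B).toContinuousLinearMap.hasFDerivAt
  refine (hbil : HasFDerivAt (fun y => y ⬝ᵥ B *ᵥ y) _ x).congr_fderiv ?_
  ext h
  simp only [id_eq, ContinuousLinearMap.precompR_apply, ContinuousLinearMap.compL_apply,
    LinearMap.coe_toContinuousLinearMap', mulVecBilin_apply, _root_.add_apply,
    ContinuousLinearMap.comp_apply, dotProductL_apply, dotProduct_mulVec, ← mulVec_transpose, hB,
    ContinuousLinearMap.precompL_apply, ContinuousLinearMap.id_apply, dotProduct_comm h, map_smul,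
    _root_.smul_apply, smul_eq_mul]
  ring

lemma sq_norm_le_dotProduct_self (u : n → ℝ) : ‖u‖ ^ 2 ≤ u ⬝ᵥ u := by
  have hcoord : ∀ i, ‖u i‖ ≤ √(u ⬝ᵥ u) := fun i => by
    have := Finset.single_le_sum (fun j _ => mul_self_nonneg (u j)) (Finset.mem_univ i)
    exact Real.abs_le_sqrt (by simpa [dotProduct, sq] using this)
  calc ‖u‖ ^ 2 ≤ √(u ⬝ᵥ u) ^ 2 :=
        pow_le_pow_left₀ (norm_nonneg u) ((pi_norm_le_iff_of_nonneg (sqrt_nonneg _)).2 hcoord) 2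
    _ = u ⬝ᵥ u := sq_sqrt (dotProduct_self_star_nonneg u)

lemma Matrix.PosSemidef.exists_exp_neg_half_mul_norm_mulVec_le [DecidableEq n]
    {B : Matrix n n ℝ} (hB : B.PosSemidef) :
    ∃ K, ∀ z : n → ℝ, exp (-(z ⬝ᵥ B *ᵥ z) / 2) * ‖B *ᵥ z‖ ≤ K := by
  obtain ⟨L, rfl⟩ := CStarAlgebra.nonneg_iff_eq_star_mul_self.mp hB.nonneg
  set T := (mulVecLin (star L)).toContinuousLinearMap
  refine ⟨‖T‖, fun z => ?_⟩
  have hquad : z ⬝ᵥ (star L * L) *ᵥ z = (L *ᵥ z) ⬝ᵥ (L *ᵥ z) := by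
    rw [← mulVec_mulVec, dotProduct_mulVec, star_eq_conjTranspose,
      conjTranspose_eq_transpose_of_trivial, vecMul_transpose]
  have hvec : ‖(star L * L) *ᵥ z‖ ≤ ‖T‖ * ‖L *ᵥ z‖ := by
    rw [← mulVec_mulVec]; exact T.le_opNorm _
  calc exp (-(z ⬝ᵥ (star L * L) *ᵥ z) / 2) * ‖(star L * L) *ᵥ z‖
      ≤ exp (-(‖L *ᵥ z‖ ^ 2 / 2)) * (‖T‖ * ‖L *ᵥ z‖) := by
        gcongr
        rw [hquad]; linarith [sq_norm_le_dotProduct_self (L *ᵥ z)]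
    _ = ‖T‖ * (‖L *ᵥ z‖ * exp (-(‖L *ᵥ z‖ ^ 2 / 2))) := by ring
    _ ≤ ‖T‖ := mul_le_of_le_one_right (norm_nonneg _) (mul_exp_neg_sq_div_two_le_one _)

end DotProduct

lemma grad_eq_of_hasFDerivAt {D : ℕ} {f : (Fin D → ℝ) → ℝ} {w x : Fin D → ℝ}
    (hf : HasFDerivAt f (dotProductL w) x) : grad f x = w := by
  funext i
  simp [grad, hf.fderiv]

section Gaussian

variable {D : ℕ} {C : Matrix (Fin D) (Fin D) ℝ}

lemma gaussDensity_pos (hC : C.PosDef) (m x : Fin D → ℝ) : 0 < gaussDensity m C x := by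
  have := hC.det_pos
  unfold gaussDensity
  positivity

lemma gaussDensity_le (hC : C.PosDef) (m x : Fin D → ℝ) :
    gaussDensity m C x ≤ (2 * π) ^ (-(D : ℝ) / 2) * C.det ^ (-(1 : ℝ) / 2) := by
  have := hC.det_pos
  have hquad := hC.inv.posSemidef.dotProduct_mulVec_nonneg (x - m)
  rw [star_trivial] at hquad
  exact mul_le_of_le_one_right (by positivity) (exp_le_one_iff.2 (by linarith))

lemma continuous_gaussDensity_mean (C : Matrix (Fin D) (Fin D) ℝ) (x : Fin D → ℝ) :
    Continuous fun m => gaussDensity m C x := by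
  unfold gaussDensity
  fun_prop

lemma hasFDerivAt_gaussDensity (hC : C.PosDef) (m x : Fin D → ℝ) :
    HasFDerivAt (gaussDensity m C)
      (dotProductL (-gaussDensity m C x • C⁻¹ *ᵥ (x - m))) x := by
  have hsymm : (C⁻¹)ᵀ = C⁻¹ := by
    simpa [conjTranspose_eq_transpose_of_trivial] using hC.inv.isHermitian.eq
  have hquad := (hasFDerivAt_dotProduct_mulVec_self hsymm (x - m)).comp x
    ((hasFDerivAt_id x).sub_const m)
  have hexp : HasFDerivAt (fun y => exp (-((y - m) ⬝ᵥ C⁻¹ *ᵥ (y - m)) / 2)) _ x :=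
    (hquad.neg.mul_const (2⁻¹ : ℝ)).exp
  refine (hexp.const_mul ((2 * π) ^ (-(D : ℝ) / 2) * C.det ^ (-(1 : ℝ) / 2)) :
    HasFDerivAt (gaussDensity m C) _ x).congr_fderiv ?_
  ext h
  simp only [div_eq_mul_inv, neg_mul, one_mul, id_eq, Pi.neg_apply, Function.comp_apply,
    sub_dotProduct, neg_sub, map_smul, ContinuousLinearMap.comp_id, smul_neg, ne_eq,
    OfNat.ofNat_ne_zero, not_false_eq_true, inv_smul_smul₀, _root_.neg_apply, _root_.smul_apply,
    dotProductL_apply, smul_eq_mul, gaussDensity, neg_smul, map_neg, neg_inj]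
  ring

lemma grad_gaussDensity (hC : C.PosDef) (m x : Fin D → ℝ) :
    grad (gaussDensity m C) x = -gaussDensity m C x • C⁻¹ *ᵥ (x - m) :=
  grad_eq_of_hasFDerivAt (hasFDerivAt_gaussDensity hC m x)

lemma continuous_grad_gaussDensity_mean (hC : C.PosDef) (x : Fin D → ℝ) :
    Continuous fun m => grad (gaussDensity m C) x := by
  simp_rw [grad_gaussDensity hC]
  exact (continuous_gaussDensity_mean C x).neg.smul (by fun_prop)

lemma exists_norm_grad_gaussDensity_le (hC : C.PosDef) :
    ∃ K, ∀ m x : Fin D → ℝ, ‖grad (gaussDensity m C) x‖ ≤ K := by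
  obtain ⟨K, hK⟩ := hC.inv.posSemidef.exists_exp_neg_half_mul_norm_mulVec_le
  have hc : 0 ≤ (2 * π) ^ (-(D : ℝ) / 2) * C.det ^ (-(1 : ℝ) / 2) := by
    have := hC.det_pos
    positivity
  refine ⟨(2 * π) ^ (-(D : ℝ) / 2) * C.det ^ (-(1 : ℝ) / 2) * K, fun m x => ?_⟩
  rw [grad_gaussDensity hC, norm_smul, norm_neg, norm_of_nonneg (gaussDensity_pos hC m x).le,
    gaussDensity, mul_assoc]
  exact mul_le_mul_of_nonneg_left (hK (x - m)) hc

end Gaussian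

lemma integral_mulVec {m n X : Type*} [Fintype m] [Fintype n] [MeasurableSpace X]
    {P : Measure X} (A : Matrix m n ℝ) {f : X → n → ℝ} (hf : Integrable f P) :
    ∫ x, A *ᵥ f x ∂P = A *ᵥ ∫ x, f x ∂P :=
  (mulVecLin A).toContinuousLinearMap.integral_comp_comm hf

section Mixture

variable {D : ℕ} {C : Matrix (Fin D) (Fin D) ℝ} {X : Type*} [MeasurableSpace X]
  {P : Measure X} {μ : X → Fin D → ℝ}

noncomputable def gaussMixture (μ : X → Fin D → ℝ) (C : Matrix (Fin D) (Fin D) ℝ)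
    (P : Measure X) (y : Fin D → ℝ) : ℝ :=
  ∫ x, gaussDensity (μ x) C y ∂P

lemma integrable_gaussDensity [IsFiniteMeasure P] (hC : C.PosDef) (hμ : Measurable μ)
    (y : Fin D → ℝ) : Integrable (fun x => gaussDensity (μ x) C y) P :=
  .of_bound ((continuous_gaussDensity_mean C y).measurable.comp hμ).aestronglyMeasurable _
    (ae_of_all _ fun x => by
      rw [norm_of_nonneg (gaussDensity_pos hC _ _).le]
      exact gaussDensity_le hC _ _)

lemma gaussMixture_pos [IsFiniteMeasure P] [NeZero P] (hC : C.PosDef) (hμ : Measurable μ)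
    (y : Fin D → ℝ) : 0 < gaussMixture μ C P y := by
  refine (integral_pos_iff_support_of_nonneg (fun x => (gaussDensity_pos hC _ _).le)
    (integrable_gaussDensity hC hμ y)).2 ?_
  have hsupp : Function.support (fun x => gaussDensity (μ x) C y) = univ :=
    eq_univ_of_forall fun x => (gaussDensity_pos hC _ _).ne'
  rw [hsupp, Measure.measure_univ_pos]
  exact NeZero.ne P

lemma integrable_grad_gaussDensity [IsFiniteMeasure P] (hC : C.PosDef) (hμ : Measurable μ)
    (y : Fin D → ℝ) : Integrable (fun x => grad (gaussDensity (μ x) C) y) P := by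
  obtain ⟨K, hK⟩ := exists_norm_grad_gaussDensity_le hC
  exact .of_bound ((continuous_grad_gaussDensity_mean hC y).measurable.comp hμ).aestronglyMeasurable
    K (ae_of_all _ fun x => hK _ _)

lemma hasFDerivAt_gaussMixture [IsFiniteMeasure P] (hC : C.PosDef) (hμ : Measurable μ)
    (y : Fin D → ℝ) :
    HasFDerivAt (gaussMixture μ C P) (dotProductL (∫ x, grad (gaussDensity (μ x) C) y ∂P)) y := by
  obtain ⟨K, hK⟩ := exists_norm_grad_gaussDensity_le hC
  have hderiv : ∀ x y, HasFDerivAt (gaussDensity (μ x) C)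
      (dotProductL (grad (gaussDensity (μ x) C) y)) y := fun x y => by
    rw [grad_gaussDensity hC]
    exact hasFDerivAt_gaussDensity hC _ _
  rw [← dotProductL.integral_comp_comm (integrable_grad_gaussDensity hC hμ y)]
  exact hasFDerivAt_integral_of_dominated_of_fderiv_le
    (bound := fun _ => ‖(dotProductL : (Fin D → ℝ) →L[ℝ] _)‖ * K) Filter.univ_mem
    (.of_forall fun y => (integrable_gaussDensity hC hμ y).aestronglyMeasurable)
    (integrable_gaussDensity hC hμ y)
    (dotProductL.continuous.comp_aestronglyMeasurable
      (integrable_grad_gaussDensity hC hμ y).aestronglyMeasurable)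
    (ae_of_all _ fun x y _ => dotProductL.le_opNorm_of_le (hK _ _)) (integrable_const _)
    (ae_of_all _ fun x y _ => hderiv x y)

lemma gaussDensity_smul_mean (hC : C.PosDef) (m y : Fin D → ℝ) :
    gaussDensity m C y • m = gaussDensity m C y • y + C *ᵥ grad (gaussDensity m C) y := by
  rw [grad_gaussDensity hC, mulVec_smul, mulVec_mulVec,
    mul_nonsing_inv _ (isUnit_iff_ne_zero.2 hC.det_pos.ne'), one_mulVec]
  module

lemma integrable_gaussDensity_smul_mean [IsFiniteMeasure P] (hC : C.PosDef) (hμ : Measurable μ)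
    (y : Fin D → ℝ) : Integrable (fun x => gaussDensity (μ x) C y • μ x) P := by
  simp_rw [gaussDensity_smul_mean hC]
  exact ((integrable_gaussDensity hC hμ y).smul_const y).add
    ((mulVecLin C).toContinuousLinearMap.integrable_comp (integrable_grad_gaussDensity hC hμ y))

lemma integral_grad_gaussDensity [IsFiniteMeasure P] (hC : C.PosDef) (hμ : Measurable μ)
    (y : Fin D → ℝ) :
    ∫ x, grad (gaussDensity (μ x) C) y ∂P
      = C⁻¹ *ᵥ (∫ x, gaussDensity (μ x) C y • μ x ∂P - gaussMixture μ C P y • y) := by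
  have hgrad : ∀ m, grad (gaussDensity m C) y
      = C⁻¹ *ᵥ (gaussDensity m C y • m - gaussDensity m C y • y) := fun m => by
    rw [grad_gaussDensity hC, ← mulVec_smul]
    congr 1
    module
  simp_rw [hgrad]
  rw [integral_mulVec (f := fun x => gaussDensity (μ x) C y • μ x - gaussDensity (μ x) C y • y) _
      ((integrable_gaussDensity_smul_mean hC hμ y).sub
      ((integrable_gaussDensity hC hμ y).smul_const y)),
    integral_sub (integrable_gaussDensity_smul_mean hC hμ y)
      ((integrable_gaussDensity hC hμ y).smul_const y), integral_smul_const]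
  rfl

lemma grad_log_gaussMixture [IsFiniteMeasure P] [NeZero P] (hC : C.PosDef) (hμ : Measurable μ)
    (y : Fin D → ℝ) :
    grad (fun y' => log (gaussMixture μ C P y')) y
      = C⁻¹ *ᵥ (∫ x, (gaussDensity (μ x) C y / gaussMixture μ C P y) • μ x ∂P - y) := by
  have hq := gaussMixture_pos (P := P) hC hμ y
  have hlog := (hasFDerivAt_gaussMixture hC hμ y).log hq.ne'
  rw [← map_smul] at hlog
  rw [grad_eq_of_hasFDerivAt hlog, integral_grad_gaussDensity hC hμ, ← mulVec_smul]
  simp_rw [div_eq_inv_mul, mul_smul]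
  rw [integral_smul, smul_sub, smul_smul, inv_mul_cancel₀ hq.ne', one_smul]

end Mixture

theorem time_reversal_drift_as_posterior_mean_general
    {D : ℕ} (Γ : Matrix (Fin D) (Fin D) ℝ) (hΓ : Γ.PosDef)
    {a v : ℝ} (ha : a ≠ 0) (hv : 0 < v)
    (P : Measure (Fin D → ℝ)) [IsProbabilityMeasure P]
    (q : (Fin D → ℝ) → ℝ)
    (hq : ∀ y, q y = ∫ x₀, gaussDensity (a • x₀) (v • Γ) y ∂P) :
    (∀ y, Integrable (fun x₀ => gaussDensity (a • x₀) (v • Γ) y) P) ∧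
    (∀ y, 0 < q y) ∧
    Differentiable ℝ q ∧
    (∀ y, Integrable (fun x₀ => grad (gaussDensity (a • x₀) (v • Γ)) y) P) ∧
    (∀ y, grad q y = ∫ x₀, grad (gaussDensity (a • x₀) (v • Γ)) y ∂P) ∧
    (∀ y, Integrable (fun x₀ => (gaussDensity (a • x₀) (v • Γ) y / q y) • x₀) P) ∧
    (∀ y, grad (fun y' => Real.log (q y')) y
        = v⁻¹ • Γ⁻¹.mulVec
            (a • (∫ x₀, (gaussDensity (a • x₀) (v • Γ) y / q y) • x₀ ∂P) - y)) := by
  have hC : (v • Γ).PosDef := hΓ.smul hv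
  have hμ : Measurable fun x₀ : Fin D → ℝ => a • x₀ := measurable_const_smul a
  obtain rfl : q = gaussMixture (a • ·) (v • Γ) P := funext hq
  have hderiv := hasFDerivAt_gaussMixture (P := P) hC hμ
  have hpost : ∀ y, Integrable (fun x₀ =>
      (gaussDensity (a • x₀) (v • Γ) y / gaussMixture (a • ·) (v • Γ) P y) • x₀) P := fun y => by
    refine ((integrable_gaussDensity_smul_mean hC hμ y).smul
      (a * gaussMixture (a • ·) (v • Γ) P y)⁻¹).congr (ae_of_all _ fun x₀ => ?_)
    simp only [Pi.smul_apply, smul_smul]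
    congr 1
    field_simp
  refine ⟨integrable_gaussDensity hC hμ, gaussMixture_pos hC hμ,
    fun y => (hderiv y).differentiableAt, integrable_grad_gaussDensity hC hμ,
    fun y => grad_eq_of_hasFDerivAt (hderiv y), hpost, fun y => ?_⟩
  have : Invertible v := invertibleOfNonzero hv.ne'
  rw [grad_log_gaussMixture hC hμ, Matrix.inv_smul Γ v (isUnit_iff_ne_zero.2 hΓ.det_pos.ne'),
    invOf_eq_inv, smul_mulVec, ← integral_smul]
  simp_rw [smul_comm a]

/-- The time-reversal drift adjustment `G ∇ ln q` as a rescaled posterior conditional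
expectation of the initial value: with `q(y) = ∫ N_D(y; a x₀, v Γ) dP(x₀)` for an arbitrary
probability measure `P`, (i) `q` is finite, strictly positive and differentiable with
`∇q(y) = ∫ ∇_y N_D(y; a x₀, v Γ) dP(x₀)`; (ii) the posterior mean
`m(y) = ∫ x₀ (N_D(y; a x₀, v Γ)/q(y)) dP(x₀)` is well defined; and (iii)
`∇ ln q(y) = (1/v) Γ⁻¹ (a m(y) − y)`. -/
theorem time_reversal_drift_as_posterior_mean
    {D : ℕ} (hD : 1 ≤ D) (Γ : Matrix (Fin D) (Fin D) ℝ) (hΓ : Γ.PosDef)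
    {a v : ℝ} (ha : a ≠ 0) (hv : 0 < v)
    (P : Measure (Fin D → ℝ)) [IsProbabilityMeasure P]
    (q : (Fin D → ℝ) → ℝ)
    (hq : ∀ y, q y = ∫ x₀, gaussDensity (a • x₀) (v • Γ) y ∂P) :
    (∀ y, Integrable (fun x₀ => gaussDensity (a • x₀) (v • Γ) y) P) ∧
    (∀ y, 0 < q y) ∧
    Differentiable ℝ q ∧
    (∀ y, Integrable (fun x₀ => grad (gaussDensity (a • x₀) (v • Γ)) y) P) ∧
    (∀ y, grad q y = ∫ x₀, grad (gaussDensity (a • x₀) (v • Γ)) y ∂P) ∧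
    (∀ y, Integrable (fun x₀ => (gaussDensity (a • x₀) (v • Γ) y / q y) • x₀) P) ∧
    (∀ y, grad (fun y' => Real.log (q y')) y
        = v⁻¹ • Γ⁻¹.mulVec
            (a • (∫ x₀, (gaussDensity (a • x₀) (v • Γ) y / q y) • x₀ ∂P) - y)) :=
  time_reversal_drift_as_posterior_mean_general Γ hΓ ha hv P q hq
end

section
/- Let D ≥ 1, let (Θ, 𝒜, μ) be a probability space, and let k : Θ × ℝ^D → (0,∞) be measurable and, for each θ, differentiable in x. Define π(x) = ∫_Θ k(θ, x) dμ(θ), assumed finite, strictly positive, and differentiable with ∇π(x) = ∫_Θ ∇_x k(θ, x) dμ(θ) for all x. Let s : ℝ^D → ℝ^D be measurable and assume the finiteness of the integrals ∫_{ℝ^D} π(x) ‖∇ ln π(x)‖² dx, ∫_{ℝ^D} ∫_Θ k(θ,x) ‖∇_x ln k(θ,x)‖² dμ(θ) dx, and ∫_{ℝ^D} π(x) ‖s(x)‖² dx. Then ∫_{ℝ^D} π(x) ‖∇ ln π(x) − s(x)‖² dx − ∫_{ℝ^D} ∫_Θ k(θ,x) ‖∇_x ln k(θ,x) − s(x)‖²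 dμ(θ) dx = ∫_{ℝ^D} π(x) ‖∇ ln π(x)‖² dx − ∫_{ℝ^D} ∫_Θ k(θ,x) ‖∇_x ln k(θ,x)‖² dμ(θ) dx. In particular, this difference does not depend on s, so the two score-matching objectives have the same minimizers over s. -/
open MeasureTheory Real Set

noncomputable def sqnorm {D : ℕ} (u : Fin D → ℝ) : ℝ := ∑ i, u i ^ 2

/-!
Expand both squares as `‖a - s‖² = ‖a‖² - 2 ⟪a, s⟫ + ‖s‖²`. The `‖s‖²` terms agree because
`∫ k(θ, x) dμ(θ) = π(x)`, and the cross terms agree because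
`π ∇ ln π = ∇π = ∫ ∇ₓk dμ = ∫ k ∇ₓ ln k dμ`. Hence the two objectives differ only through
their `s`-free parts.
-/

section

variable {D : ℕ}

lemma measurable_grad (f : (Fin D → ℝ) → ℝ) : Measurable (grad f) :=
  measurable_pi_lambda _ fun _ => measurable_fderiv_apply_const ℝ f _

lemma smul_grad_log {f : (Fin D → ℝ) → ℝ} {x : Fin D → ℝ}
    (hf : DifferentiableAt ℝ f x) (hfx : f x ≠ 0) :
    f x • grad (fun y => Real.log (f y)) x = grad f x := by
  ext i
  simp only [grad, (hf.hasFDerivAt.log hfx).fderiv, Pi.smul_apply,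
    FunLike.coe_smul, smul_eq_mul]
  field_simp

lemma mul_sqnorm_sub (c : ℝ) (u v : Fin D → ℝ) :
    c * sqnorm (u - v) = c * sqnorm u - 2 * ((c • u) ⬝ᵥ v) + c * sqnorm v := by
  simp only [sqnorm, dotProduct, Pi.sub_apply, Pi.smul_apply, smul_eq_mul, Finset.mul_sum,
    ← Finset.sum_sub_distrib, ← Finset.sum_add_distrib]
  exact Finset.sum_congr rfl fun i _ => by ring

lemma abs_smul_dotProduct_le {c : ℝ} (hc : 0 ≤ c) (u v : Fin D → ℝ) :
    |(c • u) ⬝ᵥ v| ≤ (c * sqnorm u + c * sqnorm v) / 2 := by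
  have hsub := mul_sqnorm_sub c u v
  have hadd := mul_sqnorm_sub c u (-v)
  have hsq : ∀ w : Fin D → ℝ, 0 ≤ c * sqnorm w := fun w =>
    mul_nonneg hc (Finset.sum_nonneg fun i _ => sq_nonneg (w i))
  have hneg : sqnorm (-v) = sqnorm v := by simp [sqnorm]
  rw [dotProduct_neg, hneg] at hadd
  rw [abs_le]
  constructor <;> linarith [hsq (u - v), hsq (u - -v)]

variable {α : Type*} [MeasurableSpace α] {μ : Measure α}

lemma integral_dotProduct_const {g : α → Fin D → ℝ} (hg : Integrable g μ) (v : Fin D → ℝ) :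
    ∫ a, g a ⬝ᵥ v ∂μ = (∫ a, g a ∂μ) ⬝ᵥ v := by
  simp only [dotProduct]
  rw [integral_finsetSum _ fun i _ => (hg.eval i).mul_const _]
  exact Finset.sum_congr rfl fun i _ => by rw [integral_mul_const, eval_integral hg.eval]

lemma integrable_smul_dotProduct {w : α → ℝ} {g v : α → Fin D → ℝ} (hw : ∀ a, 0 ≤ w a)
    (hm : AEStronglyMeasurable (fun a => (w a • g a) ⬝ᵥ v a) μ)
    (hg : Integrable (fun a => w a * sqnorm (g a)) μ)
    (hv : Integrable (fun a => w a * sqnorm (v a)) μ) :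
    Integrable (fun a => (w a • g a) ⬝ᵥ v a) μ :=
  ((hg.add hv).div_const 2).mono' hm <| Filter.Eventually.of_forall fun a =>
    (Real.norm_eq_abs _).trans_le (abs_smul_dotProduct_le (hw a) (g a) (v a))

lemma integral_mul_sqnorm_sub {w : α → ℝ} {g : α → Fin D → ℝ} (hw : Integrable w μ)
    (hwg : Integrable (fun a => w a • g a) μ) (hg : Integrable (fun a => w a * sqnorm (g a)) μ)
    (v : Fin D → ℝ) :
    ∫ a, w a * sqnorm (g a - v) ∂μ =
      ∫ a, w a * sqnorm (g a) ∂μ - 2 * ((∫ a, w a • g a ∂μ) ⬝ᵥ v) + (∫ a, w a ∂μ) * sqnorm v := by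
  have hcross : Integrable (fun a => 2 * ((w a • g a) ⬝ᵥ v)) μ := by
    simpa only [dotProduct] using
      (integrable_finsetSum _ fun i _ => (hwg.eval i).mul_const (v i)).const_mul 2
  have hsub : Integrable (fun a => w a * sqnorm (g a) - 2 * ((w a • g a) ⬝ᵥ v)) μ :=
    hg.sub hcross
  simp_rw [mul_sqnorm_sub]
  rw [integral_add hsub (hw.mul_const _), integral_sub hg hcross,
    integral_const_mul, integral_dotProduct_const hwg, integral_mul_const]

lemma integral_sub_integral_eq_of_ae_eq_add {F G A B C : α → ℝ} (hA : Integrable A μ)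
    (hB : Integrable B μ) (hC : Integrable C μ) (hF : F =ᵐ[μ] A + C) (hG : G =ᵐ[μ] B + C) :
    ∫ a, F a ∂μ - ∫ a, G a ∂μ = ∫ a, A a ∂μ - ∫ a, B a ∂μ := by
  rw [integral_congr_ae hF, integral_congr_ae hG, integral_add' hA hC, integral_add' hB hC]
  ring

end

theorem denoising_score_matching_identity_general
    {D : ℕ}
    {Θ : Type*} [MeasurableSpace Θ] (μ : Measure Θ) [IsProbabilityMeasure μ]
    (k : Θ → (Fin D → ℝ) → ℝ)
    (hkpos : ∀ θ x, 0 < k θ x)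
    (hkdiff : ∀ θ, Differentiable ℝ (k θ))
    (pmix : (Fin D → ℝ) → ℝ)
    (hpmixint : ∀ x, Integrable (fun θ => k θ x) μ)
    (hpmix : ∀ x, pmix x = ∫ θ, k θ x ∂μ)
    (hpmixpos : ∀ x, 0 < pmix x)
    (hpmixdiff : Differentiable ℝ pmix)
    (hpmixgradint : ∀ x, Integrable (fun θ => grad (k θ) x) μ)
    (hpmixgrad : ∀ x, grad pmix x = ∫ θ, grad (k θ) x ∂μ)
    (s : (Fin D → ℝ) → Fin D → ℝ) (hs : Measurable s)
    (h1 : Integrable fun x => pmix x * sqnorm (grad (fun y => Real.log (pmix y)) x))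
    (h2 : Integrable (fun p : Θ × (Fin D → ℝ) =>
      k p.1 p.2 * sqnorm (grad (fun y => Real.log (k p.1 y)) p.2)) (μ.prod volume))
    (h3 : Integrable fun x => pmix x * sqnorm (s x)) :
    (∫ x, pmix x * sqnorm (grad (fun y => Real.log (pmix y)) x - s x)) -
        (∫ x, ∫ θ, k θ x * sqnorm (grad (fun y => Real.log (k θ y)) x - s x) ∂μ)
      = (∫ x, pmix x * sqnorm (grad (fun y => Real.log (pmix y)) x)) -
          (∫ x, ∫ θ, k θ x * sqnorm (grad (fun y => Real.log (k θ y)) x) ∂μ) := by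
  have hscore_mix : ∀ x, pmix x • grad (fun y => Real.log (pmix y)) x = grad pmix x :=
    fun x => smul_grad_log (hpmixdiff x) (hpmixpos x).ne'
  have hscore : ∀ θ x, k θ x • grad (fun y => Real.log (k θ y)) x = grad (k θ) x :=
    fun θ x => smul_grad_log (hkdiff θ x) (hkpos θ x).ne'
  have hcross : Integrable fun x => grad pmix x ⬝ᵥ s x := by
    have hmeas : Measurable fun x => grad pmix x ⬝ᵥ s x := by
      have := measurable_grad pmix
      unfold dotProduct
      fun_prop
    simp_rw [← hscore_mix] at hmeas ⊢
    exact integrable_smul_dotProduct (fun x => (hpmixpos x).le) hmeas.aestronglyMeasurable h1 h3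
  have hswap : Integrable (fun p : (Fin D → ℝ) × Θ =>
      k p.2 p.1 * sqnorm (grad (fun y => Real.log (k p.2 y)) p.1)) (volume.prod μ) := h2.swap
  have hinner : ∀ᵐ x, ∫ θ, k θ x * sqnorm (grad (fun y => Real.log (k θ y)) x - s x) ∂μ =
      (∫ θ, k θ x * sqnorm (grad (fun y => Real.log (k θ y)) x) ∂μ) +
        (pmix x * sqnorm (s x) - 2 * (grad pmix x ⬝ᵥ s x)) := by
    filter_upwards [hswap.prod_right_ae] with x hx
    rw [integral_mul_sqnorm_sub (hpmixint x) (by simpa only [hscore] using hpmixgradint x) hx]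
    simp only [hscore, ← hpmixgrad, ← hpmix]
    ring
  refine integral_sub_integral_eq_of_ae_eq_add h1 hswap.integral_prod_left
    (h3.sub (hcross.const_mul 2)) (Filter.Eventually.of_forall fun x => ?_) hinner
  simp only [Pi.add_apply, Pi.sub_apply, mul_sqnorm_sub, hscore_mix]
  ring

/-- The denoising score matching identity (Vincent) for a mixture density
`π(x) = ∫ k(θ,x) dμ(θ)`: the Fisher-divergence objective
`∫ π ‖∇ ln π − s‖²` and the conditional score-matching objective
`∫∫ k ‖∇ ln k − s‖²` differ by a constant not depending on `s`. -/
theorem denoising_score_matching_identity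
    {D : ℕ} (hD : 1 ≤ D)
    {Θ : Type*} [MeasurableSpace Θ] (μ : Measure Θ) [IsProbabilityMeasure μ]
    (k : Θ → (Fin D → ℝ) → ℝ)
    (hkmeas : Measurable (Function.uncurry k))
    (hkpos : ∀ θ x, 0 < k θ x)
    (hkdiff : ∀ θ, Differentiable ℝ (k θ))
    (pmix : (Fin D → ℝ) → ℝ)
    (hpmixint : ∀ x, Integrable (fun θ => k θ x) μ)
    (hpmix : ∀ x, pmix x = ∫ θ, k θ x ∂μ)
    (hpmixpos : ∀ x, 0 < pmix x)
    (hpmixdiff : Differentiable ℝ pmix)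
    (hpmixgradint : ∀ x, Integrable (fun θ => grad (k θ) x) μ)
    (hpmixgrad : ∀ x, grad pmix x = ∫ θ, grad (k θ) x ∂μ)
    (s : (Fin D → ℝ) → Fin D → ℝ) (hs : Measurable s)
    (h1 : Integrable fun x => pmix x * sqnorm (grad (fun y => Real.log (pmix y)) x))
    (h2 : Integrable (fun p : Θ × (Fin D → ℝ) =>
      k p.1 p.2 * sqnorm (grad (fun y => Real.log (k p.1 y)) p.2)) (μ.prod volume))
    (h3 : Integrable fun x => pmix x * sqnorm (s x)) :
    (∫ x, pmix x * sqnorm (grad (fun y => Real.log (pmix y)) x - s x)) -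
        (∫ x, ∫ θ, k θ x * sqnorm (grad (fun y => Real.log (k θ y)) x - s x) ∂μ)
      = (∫ x, pmix x * sqnorm (grad (fun y => Real.log (pmix y)) x)) -
          (∫ x, ∫ θ, k θ x * sqnorm (grad (fun y => Real.log (k θ y)) x) ∂μ) :=
  denoising_score_matching_identity_general μ k hkpos hkdiff pmix hpmixint hpmix hpmixpos hpmixdiff
    hpmixgradint hpmixgrad s hs h1 h2 h3
end

section
/- Let D ≥ 1 and τ > 0. Let p_{t'|t} : ℝ^D × ℝ^D → (0,∞) be a family of measurable positive transition densities for 0 ≤ t < t' ≤ τ satisfying ∫ p_{t'|t}(x'|x) dx' = 1 and the Chapman–Kolmogorov equations ∫ p_{t'|t}(z|x) p_{t''|t'}(y|z) dz = p_{t''|t}(y|x) for 0 ≤ t < t' < t'' ≤ τ. Fix x₀ ∈ ℝ^D and a probability measure Π on ℝ^D, set h(x,t) = ∫ (p_{τ|t}(x_τ|x)/p_{τ|0}(x_τ|x₀)) dΠ(x_τ), and assume 0 < h(x,t) < ∞ for all x ∈ ℝ^D and t ∈ [0,τ). For 0 ≤ t < t' < τ define p^h_{t'|t}(x'|x) = p_{t'|t}(x'|x)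 h(x',t') / h(x,t). Then: (i) ∫ p^h_{t'|t}(x'|x) dx' = 1 for all x and 0 ≤ t < t' < τ; (ii) the family p^h satisfies the Chapman–Kolmogorov equations for 0 ≤ t < t' < t'' < τ; and (iii) for every t ∈ (0,τ) and x ∈ ℝ^D, p^h_{t|0}(x|x₀) = ∫ p_{t|0,τ}(x|x₀,x_τ) dΠ(x_τ), where p_{t|0,τ}(x|x₀,x_τ) = p_{t|0}(x|x₀) p_{τ|t}(x_τ|x) / p_{τ|0}(x_τ|x₀) is the bridge density. -/
open MeasureTheory

/-!
Chapman–Kolmogorov makes `h` space-time harmonic: `∫ p_{t'|t}(x'|x) h(x',t') dx' = h(x,t)`,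
by exchanging the `dx'` and `dΠ` integrals (Tonelli, everything being nonnegative).
Harmonicity is exactly the normalization of `p^h`, the factors `h(z,t')` cancel in its
Chapman–Kolmogorov integral, and `h(x₀,0) = 1` turns `p^h_{t|0}(x|x₀)` into the bridge mixture.
-/

section Tonelli

variable {α β : Type*} [MeasurableSpace α] [MeasurableSpace β]
  {μ : Measure α} {ν : Measure β} [SFinite μ] [SFinite ν]

theorem integral_integral_swap_of_nonneg {F : α → β → ℝ} (hF : Measurable (Function.uncurry F))
    (hF0 : ∀ a b, 0 ≤ F a b) (hFν : ∀ a, Integrable (F a) ν)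
    (hFμ : ∀ b, Integrable (fun a => F a b) μ) :
    ∫ a, ∫ b, F a b ∂ν ∂μ = ∫ b, ∫ a, F a b ∂μ ∂ν := by
  have inner_ν : ∀ a, ENNReal.ofReal (∫ b, F a b ∂ν) = ∫⁻ b, ENNReal.ofReal (F a b) ∂ν :=
    fun a => ofReal_integral_eq_lintegral_ofReal (hFν a) (ae_of_all _ (hF0 a))
  have inner_μ : ∀ b, ENNReal.ofReal (∫ a, F a b ∂μ) = ∫⁻ a, ENNReal.ofReal (F a b) ∂μ :=
    fun b => ofReal_integral_eq_lintegral_ofReal (hFμ b) (ae_of_all _ fun a => hF0 a b)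
  rw [integral_eq_lintegral_of_nonneg_ae (ae_of_all _ fun a => integral_nonneg (hF0 a))
      hF.stronglyMeasurable.integral_prod_right'.aestronglyMeasurable,
    integral_eq_lintegral_of_nonneg_ae (ae_of_all _ fun b => integral_nonneg fun a => hF0 a b)
      hF.stronglyMeasurable.integral_prod_left.aestronglyMeasurable]
  simp only [inner_ν, inner_μ]
  rw [lintegral_lintegral_swap hF.ennreal_ofReal.aemeasurable]

end Tonelli

section TransitionFamily

variable {α : Type*} [MeasurableSpace α] {μ : Measure α}

noncomputable def doobTransform (p : ℝ → ℝ → α → α → ℝ) (h : α → ℝ → ℝ) :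
    ℝ → ℝ → α → α → ℝ :=
  fun t t' x' x => p t t' x' x * h x' t' / h x t

variable {p : ℝ → ℝ → α → α → ℝ} {h : α → ℝ → ℝ} {t t' t'' : ℝ} {x y : α}

theorem doobTransform_integral_eq_one (harmonic : ∫ x', p t t' x' x * h x' t' ∂μ = h x t)
    (hx : h x t ≠ 0) : ∫ x', doobTransform p h t t' x' x ∂μ = 1 := by
  simp only [doobTransform, integral_div, harmonic, div_self hx]

theorem doobTransform_chapman_kolmogorov
    (hCK : ∫ z, p t t' z x * p t' t'' y z ∂μ = p t t'' y x) (hz : ∀ z, h z t' ≠ 0) :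
    ∫ z, doobTransform p h t t' z x * doobTransform p h t' t'' y z ∂μ =
      doobTransform p h t t'' y x := by
  have cancel : ∀ z, doobTransform p h t t' z x * doobTransform p h t' t'' y z =
      p t t' z x * p t' t'' y z * (h y t'' / h x t) := by
    intro z
    simp only [doobTransform]
    field_simp [hz z]
  simp only [cancel, integral_mul_const, hCK]
  exact (mul_div_assoc _ _ _).symm

variable [SFinite μ] {ν : Measure α} [SFinite ν] {τ : ℝ} {q : α → ℝ}

theorem integral_mul_integral_div_of_chapman_kolmogorov
    (hp : Measurable fun z => p t t' z x) (hpτ : Measurable (Function.uncurry (p t' τ)))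
    (hq : Measurable q) (hp0 : ∀ z, 0 ≤ p t t' z x) (hpτ0 : ∀ y z, 0 ≤ p t' τ y z)
    (hq0 : ∀ y, 0 ≤ q y) (hint : ∀ z, Integrable (fun y => p t' τ y z / q y) ν)
    (hCK : ∀ y, ∫ z, p t t' z x * p t' τ y z ∂μ = p t τ y x)
    (hCKint : ∀ y, Integrable (fun z => p t t' z x * p t' τ y z) μ) :
    ∫ z, p t t' z x * ∫ y, p t' τ y z / q y ∂ν ∂μ = ∫ y, p t τ y x / q y ∂ν := by
  have hF : Measurable (Function.uncurry fun z y => p t t' z x * (p t' τ y z / q y)) :=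
    (hp.comp measurable_fst).mul
      ((hpτ.comp measurable_swap).div (hq.comp measurable_snd))
  calc ∫ z, p t t' z x * ∫ y, p t' τ y z / q y ∂ν ∂μ
      = ∫ z, ∫ y, p t t' z x * (p t' τ y z / q y) ∂ν ∂μ := by simp only [integral_const_mul]
    _ = ∫ y, ∫ z, p t t' z x * (p t' τ y z / q y) ∂μ ∂ν := by
        refine integral_integral_swap_of_nonneg hF
          (fun z y => mul_nonneg (hp0 z) (div_nonneg (hpτ0 y z) (hq0 y)))
          (fun z => (hint z).const_mul _) (fun y => ?_)
        simpa only [mul_div_assoc] using (hCKint y).div_const (q y)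
    _ = ∫ y, p t τ y x / q y ∂ν := by simp only [← mul_div_assoc, integral_div, hCK]

end TransitionFamily

theorem doob_h_transform_realizes_bridge_mixture_general
    {D : ℕ} {τ : ℝ} (hτ : 0 < τ)
    (p : ℝ → ℝ → (Fin D → ℝ) → (Fin D → ℝ) → ℝ)
    (hmeas : ∀ t t', Measurable (Function.uncurry (p t t')))
    (hpos : ∀ t t', 0 ≤ t → t < t' → t' ≤ τ → ∀ x' x, 0 < p t t' x' x)
    (hCK : ∀ t t' t'', 0 ≤ t → t < t' → t' < t'' → t'' ≤ τ → ∀ x y,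
      ∫ z, p t t' z x * p t' t'' y z = p t t'' y x)
    (x₀ : Fin D → ℝ) (Pm : Measure (Fin D → ℝ)) [IsProbabilityMeasure Pm]
    (h : (Fin D → ℝ) → ℝ → ℝ)
    (hhint : ∀ x t, 0 ≤ t → t < τ →
      Integrable (fun xτ => p t τ xτ x / p 0 τ xτ x₀) Pm)
    (hh : ∀ x t, 0 ≤ t → t < τ → h x t = ∫ xτ, p t τ xτ x / p 0 τ xτ x₀ ∂Pm)
    (hhpos : ∀ x t, 0 ≤ t → t < τ → 0 < h x t)
    (ph : ℝ → ℝ → (Fin D → ℝ) → (Fin D → ℝ) → ℝ)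
    (hph : ∀ t t', 0 ≤ t → t < t' → t' < τ → ∀ x' x,
      ph t t' x' x = p t t' x' x * h x' t' / h x t) :
    (∀ t t', 0 ≤ t → t < t' → t' < τ → ∀ x, ∫ x', ph t t' x' x = 1) ∧
    (∀ t t' t'', 0 ≤ t → t < t' → t' < t'' → t'' < τ → ∀ x y,
      ∫ z, ph t t' z x * ph t' t'' y z = ph t t'' y x) ∧
    (∀ t, 0 < t → t < τ → ∀ x,
      ph 0 t x x₀ = ∫ xτ, p 0 t x x₀ * p t τ xτ x / p 0 τ xτ x₀ ∂Pm) := by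
  have hph' : ∀ t t', 0 ≤ t → t < t' → t' < τ → ∀ x' x,
      ph t t' x' x = doobTransform p h t t' x' x := hph
  have harmonic : ∀ t t', 0 ≤ t → t < t' → t' < τ → ∀ x,
      ∫ x', p t t' x' x * h x' t' = h x t := by
    intro t t' ht htt' ht'τ x
    have ht' : 0 ≤ t' := ht.trans htt'.le
    have hCKτ := hCK t t' τ ht htt' ht'τ le_rfl x
    simp only [hh _ t' ht' ht'τ, hh x t ht (htt'.trans ht'τ)]
    refine integral_mul_integral_div_of_chapman_kolmogorov
      ((hmeas t t').comp (measurable_id.prodMk measurable_const)) (hmeas t' τ)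
      ((hmeas 0 τ).comp (measurable_id.prodMk measurable_const))
      (fun z => (hpos t t' ht htt' ht'τ.le z x).le) (fun y z => (hpos t' τ ht' ht'τ le_rfl y z).le)
      (fun y => (hpos 0 τ le_rfl hτ le_rfl y x₀).le) (fun z => hhint z t' ht' ht'τ) hCKτ
      (fun y => Integrable.of_integral_ne_zero ?_)
    rw [hCKτ]
    exact (hpos t τ ht (htt'.trans ht'τ) le_rfl y x).ne'
  have h_start : h x₀ 0 = 1 := by
    simp [hh x₀ 0 le_rfl hτ, fun y => div_self (hpos 0 τ le_rfl hτ le_rfl y x₀).ne']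
  refine ⟨fun t t' ht htt' ht'τ x => ?_, fun t t' t'' ht htt' ht't'' ht''τ x y => ?_,
    fun t ht htτ x => ?_⟩
  · simp only [hph' t t' ht htt' ht'τ]
    exact doobTransform_integral_eq_one (harmonic t t' ht htt' ht'τ x)
      (hhpos x t ht (htt'.trans ht'τ)).ne'
  · have ht' : 0 ≤ t' := ht.trans htt'.le
    simp only [hph' t t' ht htt' (ht't''.trans ht''τ), hph' t' t'' ht' ht't'' ht''τ,
      hph' t t'' ht (htt'.trans ht't'') ht''τ]
    exact doobTransform_chapman_kolmogorov (hCK t t' t'' ht htt' ht't'' ht''τ.le x y)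
      fun z => (hhpos z t' ht' (ht't''.trans ht''τ)).ne'
  · rw [hph 0 t le_rfl ht htτ, h_start, div_one, hh x t ht.le htτ, ← integral_const_mul]
    simp only [mul_div_assoc]

/-- The Doob `h`-transform `p^h_{t'|t}(x'|x) = p_{t'|t}(x'|x) h(x',t')/h(x,t)` of a
transition family by the function `h(x,t) = ∫ (p_{τ|t}(x_τ|x)/p_{τ|0}(x_τ|x₀)) dΠ(x_τ)` is a
genuine normalized transition family satisfying Chapman–Kolmogorov, and its time-`t` marginal
started from `x₀` is the marginal of the mixture of diffusion bridges
`∫ p_{t|0,τ}(x|x₀,x_τ) dΠ(x_τ)` with bridge density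
`p_{t|0,τ}(x|x₀,x_τ) = p_{t|0}(x|x₀) p_{τ|t}(x_τ|x)/p_{τ|0}(x_τ|x₀)`.
Here `p t t' x' x` denotes the transition density `p_{t'|t}(x'|x)`. -/
theorem doob_h_transform_realizes_bridge_mixture
    {D : ℕ} (hD : 1 ≤ D) {τ : ℝ} (hτ : 0 < τ)
    (p : ℝ → ℝ → (Fin D → ℝ) → (Fin D → ℝ) → ℝ)
    (hmeas : ∀ t t', Measurable (Function.uncurry (p t t')))
    (hpos : ∀ t t', 0 ≤ t → t < t' → t' ≤ τ → ∀ x' x, 0 < p t t' x' x)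
    (hnorm : ∀ t t', 0 ≤ t → t < t' → t' ≤ τ → ∀ x, ∫ x', p t t' x' x = 1)
    (hCK : ∀ t t' t'', 0 ≤ t → t < t' → t' < t'' → t'' ≤ τ → ∀ x y,
      ∫ z, p t t' z x * p t' t'' y z = p t t'' y x)
    (x₀ : Fin D → ℝ) (Pm : Measure (Fin D → ℝ)) [IsProbabilityMeasure Pm]
    (h : (Fin D → ℝ) → ℝ → ℝ)
    (hhint : ∀ x t, 0 ≤ t → t < τ →
      Integrable (fun xτ => p t τ xτ x / p 0 τ xτ x₀) Pm)
    (hh : ∀ x t, 0 ≤ t → t < τ → h x t = ∫ xτ, p t τ xτ x / p 0 τ xτ x₀ ∂Pm)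
    (hhpos : ∀ x t, 0 ≤ t → t < τ → 0 < h x t)
    (ph : ℝ → ℝ → (Fin D → ℝ) → (Fin D → ℝ) → ℝ)
    (hph : ∀ t t', 0 ≤ t → t < t' → t' < τ → ∀ x' x,
      ph t t' x' x = p t t' x' x * h x' t' / h x t) :
    (∀ t t', 0 ≤ t → t < t' → t' < τ → ∀ x, ∫ x', ph t t' x' x = 1) ∧
    (∀ t t' t'', 0 ≤ t → t < t' → t' < t'' → t'' < τ → ∀ x y,
      ∫ z, ph t t' z x * ph t' t'' y z = ph t t'' y x) ∧
    (∀ t, 0 < t → t < τ → ∀ x,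
      ph 0 t x x₀ = ∫ xτ, p 0 t x x₀ * p t τ xτ x / p 0 τ xτ x₀ ∂Pm) :=
  doob_h_transform_realizes_bridge_mixture_general hτ p hmeas hpos hCK x₀ Pm h hhint hh hhpos ph hph
end
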